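/- Let n ≥ 1 be an integer, α > 0, c ∈ ℝ, 0 < A ≤ B with A ≤ e^{α·c} ≤ B, and set Θ(t) = ((α·t)/n + e^{α·c})^{1/α}. Let f : [0,∞) → ℝ be differentiable with f > 0 and f(t)/((α/n)·t + B) ≤ f'(t) ≤ f(t)/((α/n)·t + A) for all t ≥ 0. If the rescaled area f(t)·Θ(t)^{−n} converges to a limit L as t → ∞, then f(0)·B^{−n/α} ≤ L ≤ f(0)·A^{−n/α}. In particular, taking f(0) = H^n(M₀) (the initial area), A = (inf u₀)^{α}, B = (sup u₀)^{α}, the limiting radius r_∞ with L = r_∞^n·H^n(M^n) satisfies (1/sup u₀)·(H^n(M₀)/H^n(M^n))^{1/n} ≤ r_∞ ≤ (1/inf u₀)·(H^n(M₀)/H^n(M^n))^{1/n}. -/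

import Mathlib

/-!
Along the flow, `f(t) · (a t + C)^(-n/α)` with `a = α/n` has derivative of the sign of
`f'(t) (a t + C) - f(t)`. The differential inequalities therefore make it nondecreasing for
`C = B` and nonincreasing for `C = A`, and the rescaled area, whose base `e^{αc}` lies between
`A` and `B`, is squeezed between the two: `f(0) B^(-n/α) ≤ f(t) Θ(t)^(-n) ≤ f(0) A^(-n/α)`
for all `t ≥ 0`. Passing to the limit bounds `L`, and taking `n`-th roots bounds `r_∞`.
-/

open Real Set Filter Topology

section RescaledArea

variable {f f' : ℝ → ℝ} {a p A B C D : ℝ}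

theorem hasDerivAt_mul_linear_rpow_neg {d t : ℝ} (hd : HasDerivAt f d t)
    (ht : 0 < a * t + C) :
    HasDerivAt (fun s => f s * (a * s + C) ^ (-p))
      ((a * t + C) ^ (-p - 1) * (d * (a * t + C) - a * p * f t)) t := by
  have hline : HasDerivAt (fun s => a * s + C) a t := by
    simpa using ((hasDerivAt_id t).const_mul a).add_const C
  refine (hd.mul (hline.rpow_const (p := -p) (Or.inl ht.ne'))).congr_deriv ?_
  rw [show (a * t + C) ^ (-p) = (a * t + C) ^ (-p - 1) * (a * t + C) by
    rw [← rpow_add_one ht.ne']; ring_nf]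
  ring

theorem monotoneOn_mul_linear_rpow_neg (ha : 0 ≤ a) (hC : 0 < C)
    (hderiv : ∀ t, 0 ≤ t → HasDerivAt f (f' t) t)
    (hf : ∀ t, 0 ≤ t → a * p * f t ≤ f' t * (a * t + C)) :
    MonotoneOn (fun s => f s * (a * s + C) ^ (-p)) (Ici 0) := by
  have hpos : ∀ t, 0 ≤ t → 0 < a * t + C := fun t ht => by positivity
  have hg : ∀ t, 0 ≤ t → HasDerivAt (fun s => f s * (a * s + C) ^ (-p))
      ((a * t + C) ^ (-p - 1) * (f' t * (a * t + C) - a * p * f t)) t :=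
    fun t ht => hasDerivAt_mul_linear_rpow_neg (hderiv t ht) (hpos t ht)
  refine monotoneOn_of_hasDerivWithinAt_nonneg (convex_Ici 0)
    (fun t ht => (hg t ht).continuousAt.continuousWithinAt)
    (fun t ht => (hg t (interior_subset ht)).hasDerivWithinAt) fun t ht => ?_
  replace ht : 0 ≤ t := interior_subset ht
  exact mul_nonneg (rpow_nonneg (hpos t ht).le _) (sub_nonneg.2 (hf t ht))

theorem antitoneOn_mul_linear_rpow_neg (ha : 0 ≤ a) (hC : 0 < C)
    (hderiv : ∀ t, 0 ≤ t → HasDerivAt f (f' t) t)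
    (hf : ∀ t, 0 ≤ t → f' t * (a * t + C) ≤ a * p * f t) :
    AntitoneOn (fun s => f s * (a * s + C) ^ (-p)) (Ici 0) := by
  have hmono := monotoneOn_mul_linear_rpow_neg (f := -f) (f' := -f') (p := p) ha hC
    (fun t ht => (hderiv t ht).neg) fun t ht => by
      simpa only [Pi.neg_apply, mul_neg, neg_mul, neg_le_neg_iff] using hf t ht
  intro s hs t ht hst
  simpa only [Pi.neg_apply, neg_mul, neg_le_neg_iff] using hmono hs ht hst

theorem mul_linear_rpow_neg_mem_Icc (ha : 0 ≤ a) (hap : a * p = 1)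
    (hA : 0 < A) (hAD : A ≤ D) (hDB : D ≤ B)
    (hderiv : ∀ t, 0 ≤ t → HasDerivAt f (f' t) t) (hf : ∀ t, 0 ≤ t → 0 ≤ f t)
    (hlow : ∀ t, 0 ≤ t → f t / (a * t + B) ≤ f' t)
    (hup : ∀ t, 0 ≤ t → f' t ≤ f t / (a * t + A)) {t : ℝ} (ht : 0 ≤ t) :
    f 0 * B ^ (-p) ≤ f t * (a * t + D) ^ (-p) ∧ f t * (a * t + D) ^ (-p) ≤ f 0 * A ^ (-p) := by
  have hB : 0 < B := hA.trans_le (hAD.trans hDB)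
  have hgrow := monotoneOn_mul_linear_rpow_neg (p := p) ha hB hderiv fun s hs => by
    rw [hap, one_mul, ← div_le_iff₀ (by positivity)]; exact hlow s hs
  have hdecay := antitoneOn_mul_linear_rpow_neg (p := p) ha hA hderiv fun s hs => by
    rw [hap, one_mul, ← le_div_iff₀ (by positivity)]; exact hup s hs
  have hnp : -p ≤ 0 := neg_nonpos.2 (pos_of_mul_pos_right (hap ▸ one_pos) ha).le
  have hAt : 0 < a * t + A := by positivity
  constructor
  · calc f 0 * B ^ (-p) ≤ f t * (a * t + B) ^ (-p) := by
          simpa using hgrow self_mem_Ici ht ht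
      _ ≤ f t * (a * t + D) ^ (-p) := by
          gcongr ?_ * ?_
          · exact hf t ht
          · exact rpow_le_rpow_of_nonpos (by linarith) (by linarith) hnp
  · calc f t * (a * t + D) ^ (-p) ≤ f t * (a * t + A) ^ (-p) := by
          gcongr ?_ * ?_
          · exact hf t ht
          · exact rpow_le_rpow_of_nonpos (by linarith) (by linarith) hnp
      _ ≤ f 0 * A ^ (-p) := by
          simpa using hdecay self_mem_Ici ht ht

end RescaledArea

theorem div_rpow_one_div_pow (y : ℝ) {x : ℝ} (hx : 0 ≤ x) (α : ℝ) (n : ℕ) :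
    y / (x ^ (1 / α)) ^ n = y * x ^ (-(n / α)) := by
  rw [← rpow_natCast, ← rpow_mul hx, rpow_neg hx, div_eq_mul_inv, one_div_mul_eq_div]

theorem rpow_rpow_neg_div {s : ℝ} (hs : 0 ≤ s) {α : ℝ} (hα : α ≠ 0) (n : ℕ) :
    (s ^ α) ^ (-(n / α)) = (s ^ n)⁻¹ := by
  rw [← rpow_mul hs, mul_neg, mul_div_cancel₀ _ hα, rpow_neg hs, rpow_natCast]

section NthRoot

variable {n : ℕ} {s r M M₀ : ℝ}

theorem one_div_mul_rpow_one_div_pow (hn : n ≠ 0) (hM : 0 ≤ M₀ / M) :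
    (1 / s * (M₀ / M) ^ ((1 : ℝ) / n)) ^ n = M₀ * (s ^ n)⁻¹ / M := by
  rw [mul_pow, one_div (n : ℝ), rpow_inv_natCast_pow hM hn, one_div_pow]
  ring

theorem one_div_mul_rpow_one_div_le_iff (hn : n ≠ 0) (hs : 0 < s) (hr : 0 ≤ r) (hM : 0 < M)
    (hM₀ : 0 ≤ M₀) :
    1 / s * (M₀ / M) ^ ((1 : ℝ) / n) ≤ r ↔ M₀ * (s ^ n)⁻¹ ≤ r ^ n * M := by
  rw [← pow_le_pow_iff_left₀ (by positivity) hr hn,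
    one_div_mul_rpow_one_div_pow hn (by positivity), div_le_iff₀ hM]

theorem le_one_div_mul_rpow_one_div_iff (hn : n ≠ 0) (hs : 0 < s) (hr : 0 ≤ r) (hM : 0 < M)
    (hM₀ : 0 ≤ M₀) :
    r ≤ 1 / s * (M₀ / M) ^ ((1 : ℝ) / n) ↔ r ^ n * M ≤ M₀ * (s ^ n)⁻¹ := by
  rw [← pow_le_pow_iff_left₀ hr (by positivity) hn,
    one_div_mul_rpow_one_div_pow hn (by positivity), le_div_iff₀ hM]

end NthRoot

theorem stmt3_general (n : ℕ) (hn : 1 ≤ n) (α c A B : ℝ) (hα : 0 < α)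
    (hA : 0 < A) (hAc : A ≤ Real.exp (α * c)) (hcB : Real.exp (α * c) ≤ B)
    (f f' : ℝ → ℝ)
    (hderiv : ∀ t : ℝ, 0 ≤ t → HasDerivAt f (f' t) t)
    (hpos : ∀ t : ℝ, 0 ≤ t → 0 < f t)
    (hlow : ∀ t : ℝ, 0 ≤ t → f t / (α / n * t + B) ≤ f' t)
    (hup : ∀ t : ℝ, 0 ≤ t → f' t ≤ f t / (α / n * t + A))
    (L : ℝ)
    (hL : Filter.Tendsto
      (fun t : ℝ => f t / ((α * t / n + Real.exp (α * c)) ^ ((1 : ℝ) / α)) ^ (n : ℕ))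
      Filter.atTop (nhds L)) :
    (f 0 * B ^ (-((n : ℝ) / α)) ≤ L ∧ L ≤ f 0 * A ^ (-((n : ℝ) / α))) ∧
    ∀ rinf areaM areaM0 u0inf u0sup : ℝ,
      0 < u0inf → 0 < u0sup → 0 < areaM → 0 < rinf →
      A = u0inf ^ α → B = u0sup ^ α → f 0 = areaM0 → L = rinf ^ (n : ℕ) * areaM →
      (1 / u0sup) * (areaM0 / areaM) ^ ((1 : ℝ) / n) ≤ rinf ∧
      rinf ≤ (1 / u0inf) * (areaM0 / areaM) ^ ((1 : ℝ) / n) := by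
  have hn₀ : n ≠ 0 := by omega
  have hbounds : ∀ t, 0 ≤ t →
      f 0 * B ^ (-(n / α)) ≤ f t * (α / n * t + exp (α * c)) ^ (-(n / α)) ∧
        f t * (α / n * t + exp (α * c)) ^ (-(n / α)) ≤ f 0 * A ^ (-(n / α)) :=
    fun t ht => mul_linear_rpow_neg_mem_Icc (by positivity) (by field_simp)
      hA hAc hcB hderiv (fun s hs => (hpos s hs).le) hlow hup ht
  have hrescaled : Tendsto (fun t => f t * (α / n * t + exp (α * c)) ^ (-(n / α)))
      atTop (𝓝 L) := by
    refine hL.congr' ?_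
    filter_upwards [eventually_ge_atTop 0] with t ht
    rw [div_rpow_one_div_pow _ (by positivity), mul_div_right_comm]
  have hlimit : f 0 * B ^ (-(n / α)) ≤ L ∧ L ≤ f 0 * A ^ (-(n / α)) :=
    ⟨ge_of_tendsto hrescaled (eventually_ge_atTop 0 |>.mono fun t ht => (hbounds t ht).1),
      le_of_tendsto hrescaled (eventually_ge_atTop 0 |>.mono fun t ht => (hbounds t ht).2)⟩
  refine ⟨hlimit, fun r M M₀ uinf usup hinf hsup hM hr hAu hBu hf₀ hLr => ?_⟩
  subst hAu hBu hf₀ hLr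
  rw [rpow_rpow_neg_div hsup.le hα.ne', rpow_rpow_neg_div hinf.le hα.ne'] at hlimit
  exact ⟨(one_div_mul_rpow_one_div_le_iff hn₀ hsup hr.le hM (hpos 0 le_rfl).le).2 hlimit.1,
    (le_one_div_mul_rpow_one_div_iff hn₀ hinf hr.le hM (hpos 0 le_rfl).le).2 hlimit.2⟩

/-- Bounds on the limit of the rescaled area, and the resulting bounds on the
limiting radius r_∞ (Lemma 5.2 of the paper). -/
theorem stmt3 (n : ℕ) (hn : 1 ≤ n) (α c A B : ℝ) (hα : 0 < α)
    (hA : 0 < A) (hAB : A ≤ B) (hAc : A ≤ Real.exp (α * c)) (hcB : Real.exp (α * c) ≤ B)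
    (f f' : ℝ → ℝ)
    (hderiv : ∀ t : ℝ, 0 ≤ t → HasDerivAt f (f' t) t)
    (hpos : ∀ t : ℝ, 0 ≤ t → 0 < f t)
    (hlow : ∀ t : ℝ, 0 ≤ t → f t / (α / n * t + B) ≤ f' t)
    (hup : ∀ t : ℝ, 0 ≤ t → f' t ≤ f t / (α / n * t + A))
    (L : ℝ)
    (hL : Filter.Tendsto
      (fun t : ℝ => f t / ((α * t / n + Real.exp (α * c)) ^ ((1 : ℝ) / α)) ^ (n : ℕ))
      Filter.atTop (nhds L)) :
    (f 0 * B ^ (-((n : ℝ) / α)) ≤ L ∧ L ≤ f 0 * A ^ (-((n : ℝ) / α))) ∧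
    ∀ rinf areaM areaM0 u0inf u0sup : ℝ,
      0 < u0inf → 0 < u0sup → 0 < areaM → 0 < rinf →
      A = u0inf ^ α → B = u0sup ^ α → f 0 = areaM0 → L = rinf ^ (n : ℕ) * areaM →
      (1 / u0sup) * (areaM0 / areaM) ^ ((1 : ℝ) / n) ≤ rinf ∧
      rinf ≤ (1 / u0inf) * (areaM0 / areaM) ^ ((1 : ℝ) / n) :=
  stmt3_general n hn α c A B hα hA hAc hcB f f' hderiv hpos hlow hup L hL
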